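/- Let a < b, let f : ℝ → ℝ be twice continuously differentiable, let x₀ satisfy the initial-data conditions, let ε > 0, and let x be a classical solution of the ε-regularized problem such that in addition the mixed derivative ∂_t x_u exists and is continuous on [a,b]×(0,∞). Then for every t > 0 the function E(t) := ½∫ₐᵇ x_u(u,t)² du + ∫ₐᵇ f(u) x(u,t) du is differentiable at t and E'(t) ≤ −∫ₐᵇ x_u(u,t)² x_t(u,t)² du. -/

import Mathlib

/-! Differentiating under the integral sign gives `E'(t) = ∫ x_u x_ut + ∫ f x_t`. Since the
boundary values of `x` do not depend on time, integrating by parts in `u` turns `∫ x_u x_ut` into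
`-∫ x_uu x_t`, so that `E'(t) = -∫ (x_uu - f) x_t = -∫ (x_u² + ε) x_t²` by the equation. -/

open Set MeasureTheory

/-- Initial-data conditions (\(\ref{cond:x0}\)) with explicit first and second
derivative witnesses `x₀'`, `x₀''` and Hölder exponent `β`. -/
def InitDataW (a b : ℝ) (x₀ x₀' x₀'' : ℝ → ℝ) (β : ℝ) : Prop :=
  β ∈ Set.Ioo (0:ℝ) 1 ∧
  (∀ u ∈ Set.Icc a b, HasDerivWithinAt x₀ (x₀' u) (Set.Icc a b) u) ∧
  (∀ u ∈ Set.Icc a b, HasDerivWithinAt x₀' (x₀'' u) (Set.Icc a b) u) ∧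
  ContinuousOn x₀'' (Set.Icc a b) ∧
  (∃ C : ℝ, ∀ u ∈ Set.Icc a b, ∀ v ∈ Set.Icc a b, |x₀'' u - x₀'' v| ≤ C * |u - v| ^ β) ∧
  x₀ a = -1 ∧ x₀ b = 1 ∧ x₀'' a = a ∧ x₀'' b = b ∧
  (∀ u ∈ Set.Icc a b, 0 < x₀' u)

/-- A classical solution of the `ε`-regularized problem \eqref{xepseq}:
`x` is continuous on `[a,b] × [0,∞)` together with its partial derivatives
`x_u`, `x_uu` (within `[a,b]` in space) and `x_t` (within `[0,∞)` in time),
satisfies `x_t = (x_uu - f(u))/(x_u² + ε)` on `(a,b) × (0,∞)`, the boundary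
conditions `x(a,t) = -1`, `x(b,t) = 1`, and `x(·,0) = x₀`. -/
def IsClassicalSolEps (a b ε : ℝ) (f x₀ : ℝ → ℝ) (x xu xuu xt : ℝ → ℝ → ℝ) : Prop :=
  ContinuousOn (fun p : ℝ × ℝ => x p.1 p.2) (Set.Icc a b ×ˢ Set.Ici 0) ∧
  ContinuousOn (fun p : ℝ × ℝ => xu p.1 p.2) (Set.Icc a b ×ˢ Set.Ici 0) ∧
  ContinuousOn (fun p : ℝ × ℝ => xuu p.1 p.2) (Set.Icc a b ×ˢ Set.Ici 0) ∧
  ContinuousOn (fun p : ℝ × ℝ => xt p.1 p.2) (Set.Icc a b ×ˢ Set.Ici 0) ∧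
  (∀ t : ℝ, 0 ≤ t → ∀ u ∈ Set.Icc a b,
      HasDerivWithinAt (fun v => x v t) (xu u t) (Set.Icc a b) u) ∧
  (∀ t : ℝ, 0 ≤ t → ∀ u ∈ Set.Icc a b,
      HasDerivWithinAt (fun v => xu v t) (xuu u t) (Set.Icc a b) u) ∧
  (∀ u ∈ Set.Icc a b, ∀ t : ℝ, 0 ≤ t →
      HasDerivWithinAt (fun s => x u s) (xt u t) (Set.Ici 0) t) ∧
  (∀ u ∈ Set.Ioo a b, ∀ t : ℝ, 0 < t →
      xt u t = (xuu u t - f u) / ((xu u t) ^ 2 + ε)) ∧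
  (∀ t : ℝ, 0 ≤ t → x a t = -1 ∧ x b t = 1) ∧
  (∀ u ∈ Set.Icc a b, x u 0 = x₀ u)

theorem hasDerivAt_intervalIntegral_of_continuousOn {a b : ℝ} (hab : a ≤ b) {U : Set ℝ}
    (hU : IsOpen U) {g g' : ℝ → ℝ → ℝ}
    (hg : ContinuousOn (fun p : ℝ × ℝ => g p.1 p.2) (Icc a b ×ˢ U))
    (hg' : ContinuousOn (fun p : ℝ × ℝ => g' p.1 p.2) (Icc a b ×ˢ U))
    (hderiv : ∀ u ∈ Icc a b, ∀ s ∈ U, HasDerivAt (fun s => g u s) (g' u s) s)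
    {t : ℝ} (ht : t ∈ U) :
    HasDerivAt (fun s => ∫ u in a..b, g u s) (∫ u in a..b, g' u t) t := by
  obtain ⟨δ, hδ, hball⟩ := Metric.nhds_basis_closedBall.mem_iff.1 (hU.mem_nhds ht)
  have hK : Icc a b ×ˢ Metric.closedBall t δ ⊆ Icc a b ×ˢ U := prod_mono subset_rfl hball
  obtain ⟨C, hC⟩ :=
    (isCompact_Icc.prod (isCompact_closedBall t δ)).exists_bound_of_continuousOn (hg'.mono hK)
  have hIoc : uIoc a b ⊆ Icc a b := by
    rw [uIoc_of_le hab]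
    exact Ioc_subset_Icc_self
  refine (intervalIntegral.hasDerivAt_integral_of_dominated_loc_of_deriv_le
    (F := fun s u => g u s) (F' := fun s u => g' u s) (bound := fun _ => C)
    (Metric.closedBall_mem_nhds t hδ) ?_ ?_ ?_ ?_ intervalIntegrable_const ?_).2
  · filter_upwards [hU.mem_nhds ht] with s hs
    exact ((hg.uncurry_right s hs).mono hIoc).aestronglyMeasurable measurableSet_uIoc
  · exact ((hg.uncurry_right t ht).mono (uIcc_of_le hab).le).intervalIntegrable
  · exact ((hg'.uncurry_right t ht).mono hIoc).aestronglyMeasurable measurableSet_uIoc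
  · exact ae_of_all _ fun u hu s hs => hC (u, s) ⟨hIoc hu, hs⟩
  · exact ae_of_all _ fun u hu s hs => hderiv u (hIoc hu) s (hball hs)

noncomputable def regularizedEnergy (a b : ℝ) (f : ℝ → ℝ) (x xu : ℝ → ℝ → ℝ) (t : ℝ) : ℝ :=
  (1/2 : ℝ) * (∫ u in a..b, (xu u t) ^ 2) + ∫ u in a..b, f u * x u t

namespace IsClassicalSolEps

variable {a b ε : ℝ} {f x₀ : ℝ → ℝ} {x xu xuu xt xut : ℝ → ℝ → ℝ}

theorem hasDerivAt_time (hsol : IsClassicalSolEps a b ε f x₀ x xu xuu xt)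
    {u : ℝ} (hu : u ∈ Icc a b) {t : ℝ} (ht : 0 < t) :
    HasDerivAt (fun s => x u s) (xt u t) t := by
  obtain ⟨-, -, -, -, -, -, hdxt, -⟩ := hsol
  exact (hdxt u hu t ht.le).hasDerivAt (Ici_mem_nhds ht)

theorem integral_xu_mul_xu_eq (hsol : IsClassicalSolEps a b ε f x₀ x xu xuu xt) (hab : a ≤ b)
    {t s : ℝ} (ht : 0 ≤ t) (hs : 0 ≤ s) :
    ∫ u in a..b, xu u t * xu u s = xu b t + xu a t - ∫ u in a..b, xuu u t * x u s := by
  obtain ⟨-, hcxu, hcxuu, -, hdx, hdxu, -, -, hbc, -⟩ := hsol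
  rw [intervalIntegral.integral_mul_deriv_eq_deriv_mul_of_hasDerivWithinAt
      (u := fun v => xu v t) (v := fun v => x v s)
      (by rw [uIcc_of_le hab]; exact hdxu t ht) (by rw [uIcc_of_le hab]; exact hdx s hs)
      ((hcxuu.uncurry_right t ht).mono (uIcc_of_le hab).le).intervalIntegrable
      ((hcxu.uncurry_right s hs).mono (uIcc_of_le hab).le).intervalIntegrable,
    (hbc s hs).1, (hbc s hs).2]
  ring

/-- Both sides are the derivative at `s = t` of `s ↦ ∫ x_u(·,t) x_u(·,s)`, computed directly and
after integrating by parts in `u`; this avoids any symmetry of mixed partials. -/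
theorem integral_xu_mul_xut (hsol : IsClassicalSolEps a b ε f x₀ x xu xuu xt) (hab : a ≤ b)
    (hxut : ∀ u ∈ Icc a b, ∀ t : ℝ, 0 < t → HasDerivAt (fun s => xu u s) (xut u t) t)
    (hcxut : ContinuousOn (fun p : ℝ × ℝ => xut p.1 p.2) (Icc a b ×ˢ Ioi 0))
    {t : ℝ} (ht : 0 < t) :
    ∫ u in a..b, xu u t * xut u t = -∫ u in a..b, xuu u t * xt u t := by
  have ⟨hcx, hcxu, hcxuu, hcxt, _⟩ := hsol
  have hpos : Icc a b ×ˢ Ioi (0 : ℝ) ⊆ Icc a b ×ˢ Ici 0 := prod_mono subset_rfl Ioi_subset_Ici_self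
  have frozen : ∀ g : ℝ → ℝ → ℝ, ContinuousOn (fun p : ℝ × ℝ => g p.1 p.2) (Icc a b ×ˢ Ici 0) →
      ContinuousOn (fun p : ℝ × ℝ => g p.1 t) (Icc a b ×ˢ Ioi 0) := fun g hg =>
    (hg.uncurry_right t ht.le).comp continuous_fst.continuousOn fun _ hp => hp.1
  have hdirect : HasDerivAt (fun s => ∫ u in a..b, xu u t * xu u s)
      (∫ u in a..b, xu u t * xut u t) t :=
    hasDerivAt_intervalIntegral_of_continuousOn hab isOpen_Ioi
      ((frozen xu hcxu).mul (hcxu.mono hpos)) ((frozen xu hcxu).mul hcxut)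
      (fun u hu s hs => (hxut u hu s hs).const_mul (xu u t)) ht
  have hparts : HasDerivAt (fun s => xu b t + xu a t - ∫ u in a..b, xuu u t * x u s)
      (-∫ u in a..b, xuu u t * xt u t) t :=
    (hasDerivAt_intervalIntegral_of_continuousOn hab isOpen_Ioi
      ((frozen xuu hcxuu).mul (hcx.mono hpos)) ((frozen xuu hcxuu).mul (hcxt.mono hpos))
      (fun u hu s hs => (hsol.hasDerivAt_time hu hs).const_mul (xuu u t)) ht).const_sub _
  refine hdirect.unique (hparts.congr_of_eventuallyEq ?_)
  filter_upwards [Ioi_mem_nhds ht] with s hs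
  exact hsol.integral_xu_mul_xu_eq hab ht.le (le_of_lt hs)

theorem hasDerivAt_regularizedEnergy (hsol : IsClassicalSolEps a b ε f x₀ x xu xuu xt)
    (hab : a ≤ b) (hf : Continuous f)
    (hxut : ∀ u ∈ Icc a b, ∀ t : ℝ, 0 < t → HasDerivAt (fun s => xu u s) (xut u t) t)
    (hcxut : ContinuousOn (fun p : ℝ × ℝ => xut p.1 p.2) (Icc a b ×ˢ Ioi 0))
    {t : ℝ} (ht : 0 < t) :
    HasDerivAt (regularizedEnergy a b f x xu)
      ((∫ u in a..b, xu u t * xut u t) + ∫ u in a..b, f u * xt u t) t := by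
  have ⟨hcx, hcxu, _, hcxt, _⟩ := hsol
  have hpos : Icc a b ×ˢ Ioi (0 : ℝ) ⊆ Icc a b ×ˢ Ici 0 := prod_mono subset_rfl Ioi_subset_Ici_self
  have hfc : ContinuousOn (fun p : ℝ × ℝ => f p.1) (Icc a b ×ˢ Ioi 0) :=
    (hf.comp continuous_fst).continuousOn
  have hsq : HasDerivAt (fun s => ∫ u in a..b, (xu u s) ^ 2)
      (∫ u in a..b, 2 * xu u t * xut u t) t :=
    hasDerivAt_intervalIntegral_of_continuousOn hab isOpen_Ioi ((hcxu.mono hpos).pow 2)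
      ((continuousOn_const.mul (hcxu.mono hpos)).mul hcxut)
      (fun u hu s hs => by simpa using (hxut u hu s hs).fun_pow 2) ht
  have hlin : HasDerivAt (fun s => ∫ u in a..b, f u * x u s) (∫ u in a..b, f u * xt u t) t :=
    hasDerivAt_intervalIntegral_of_continuousOn hab isOpen_Ioi (hfc.mul (hcx.mono hpos))
      (hfc.mul (hcxt.mono hpos))
      (fun u hu s hs => (hsol.hasDerivAt_time hu hs).const_mul (f u)) ht
  refine ((hsq.const_mul (1/2 : ℝ)).add hlin).congr_deriv ?_
  rw [← intervalIntegral.integral_const_mul]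
  congr 2 with u
  ring

theorem integral_xu_sq_mul_xt_sq_le (hsol : IsClassicalSolEps a b ε f x₀ x xu xuu xt)
    (hab : a ≤ b) (hf : Continuous f) (hε : 0 ≤ ε) {t : ℝ} (ht : 0 < t) :
    ∫ u in a..b, (xu u t) ^ 2 * (xt u t) ^ 2 ≤
      (∫ u in a..b, xuu u t * xt u t) - ∫ u in a..b, f u * xt u t := by
  obtain ⟨-, hcxu, hcxuu, hcxt, -, -, -, hpde, -⟩ := hsol
  have hslice : ∀ g : ℝ → ℝ → ℝ, ContinuousOn (fun p : ℝ × ℝ => g p.1 p.2) (Icc a b ×ˢ Ici 0) →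
      ContinuousOn (fun u => g u t) (uIcc a b) := fun g hg =>
    (hg.uncurry_right t ht.le).mono (uIcc_of_le hab).le
  have hxuu_xt := (hslice xuu hcxuu).mul (hslice xt hcxt)
  have hf_xt := hf.continuousOn.mul (hslice xt hcxt)
  rw [← intervalIntegral.integral_sub (f := fun u => xuu u t * xt u t)
    (g := fun u => f u * xt u t) hxuu_xt.intervalIntegrable hf_xt.intervalIntegrable]
  refine intervalIntegral.integral_mono_on_of_le_Ioo hab
    (((hslice xu hcxu).pow 2).mul ((hslice xt hcxt).pow 2)).intervalIntegrable
    (hxuu_xt.sub hf_xt).intervalIntegrable fun u hu => ?_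
  -- `(x_uu - f) x_t = (x_u² + ε) x_t²` holds even where `x_u² + ε = 0`, as then both sides vanish.
  have hdissipation : xuu u t * xt u t - f u * xt u t = ((xu u t) ^ 2 + ε) * (xt u t) ^ 2 := by
    rw [← sub_mul, hpde u hu t ht]
    rcases eq_or_ne ((xu u t) ^ 2 + ε) 0 with hD | hD
    · simp [hD]
    · field_simp
  rw [hdissipation]
  nlinarith [sq_nonneg (xt u t)]

end IsClassicalSolEps

theorem lem_energy (a b : ℝ) (hab : a < b) (f : ℝ → ℝ) (hf : ContDiff ℝ 2 f)
    (x₀ : ℝ → ℝ)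
    (ε : ℝ) (hε : 0 < ε) (x xu xuu xt : ℝ → ℝ → ℝ)
    (hsol : IsClassicalSolEps a b ε f x₀ x xu xuu xt)
    (xut : ℝ → ℝ → ℝ)
    (hxut : ∀ u ∈ Set.Icc a b, ∀ t : ℝ, 0 < t →
      HasDerivAt (fun s => xu u s) (xut u t) t)
    (hcxut : ContinuousOn (fun p : ℝ × ℝ => xut p.1 p.2) (Set.Icc a b ×ˢ Set.Ioi 0)) :
    ∀ t : ℝ, 0 < t → ∃ E' : ℝ,
      HasDerivAt
        (fun s => (1/2 : ℝ) * (∫ u in a..b, (xu u s) ^ 2) + ∫ u in a..b, f u * x u s)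
        E' t ∧
      E' ≤ -∫ u in a..b, (xu u t) ^ 2 * (xt u t) ^ 2 := by
  intro t ht
  refine ⟨_, hsol.hasDerivAt_regularizedEnergy hab.le hf.continuous hxut hcxut ht, ?_⟩
  rw [hsol.integral_xu_mul_xut hab.le hxut hcxut ht]
  linarith [hsol.integral_xu_sq_mul_xt_sq_le hab.le hf.continuous hε.le ht]
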